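/- Let R be a domain. Then the following are equivalent: (1) for every cyclically presented right R-module M and every cyclic presentation π_M : R → M with nonzero kernel, the sum of any two cyclically presented π_M-exact submodules of M is again cyclically presented and π_M-exact; (2) R is a 2-fir, i.e., R is a domain in which the sum of any two principal right ideals with nonzero intersection is again a principal right ideal. -/

import Mathlib

/-!
In a 2-fir the intersection of two principal right ideals is principal: dividing out a generator
of `aR + bR` one may assume `ap + bq = 1`, and then `aR ∩ bR = apbR + bqaR` with
`apb · q = bqa · p`, so the 2-fir condition applies once more. Hence every conductor
`{r | ar ∈ bR}` is principal, which makes the kernel of a cyclic presentation principal and each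
image `π(cR)` cyclically presented. If `π⁻¹(N₁) = c₁R` and `π⁻¹(N₂) = c₂R`, these ideals meet in
`ker π ≠ 0`, so `π⁻¹(N₁ + N₂) = c₁R + c₂R` is principal.

Conversely, for `0 ≠ d ∈ aR ∩ bR` the submodules `aR/dR` and `bR/dR` of `R/dR` are cyclically
presented and exact, and exactness of their sum says that `aR + bR ≅ R` is principal.
-/

open Submodule LinearMap Function

section RightIdeals

variable {R : Type*} [Ring R]

theorem mem_span_singleton_iff_exists_mul {a x : R} : x ∈ Rᵐᵒᵖ ∙ a ↔ ∃ r, a * r = x :=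
  mem_span_singleton.trans ⟨fun ⟨r, h⟩ => ⟨r.unop, h⟩, fun ⟨r, h⟩ => ⟨.op r, h⟩⟩

theorem range_eq_span_apply_one {M : Type*} [AddCommGroup M] [Module Rᵐᵒᵖ M]
    (f : R →ₗ[Rᵐᵒᵖ] M) : range f = Rᵐᵒᵖ ∙ f 1 := by
  ext x
  rw [mem_range, mem_span_singleton]
  refine ⟨fun ⟨r, h⟩ => ⟨.op r, ?_⟩, fun ⟨r, h⟩ => ⟨r.unop, ?_⟩⟩
  · rw [← h, ← map_smul, op_smul_eq_mul, one_mul]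
  · rw [← h, ← map_smul, MulOpposite.smul_eq_mul_unop, one_mul]

theorem isPrincipal_of_linearEquiv {N : Submodule Rᵐᵒᵖ R} (e : N ≃ₗ[Rᵐᵒᵖ] R) : N.IsPrincipal :=
  ⟨⟨_, by simpa using range_eq_span_apply_one (N.subtype ∘ₗ e.symm.toLinearMap)⟩⟩

def mulLeftOp (a : R) : R →ₗ[Rᵐᵒᵖ] R :=
  DistribSMul.toLinearMap Rᵐᵒᵖ R a

@[simp]
theorem mulLeftOp_apply (a x : R) : mulLeftOp a x = a * x :=
  rfl

theorem map_mulLeftOp_span_singleton (a x : R) : map (mulLeftOp a) (Rᵐᵒᵖ ∙ x) = Rᵐᵒᵖ ∙ a * x := by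
  rw [Submodule.map_span, Set.image_singleton, mulLeftOp_apply]

theorem range_mulLeftOp (a : R) : range (mulLeftOp a) = Rᵐᵒᵖ ∙ a := by
  rw [range_eq_span_apply_one, mulLeftOp_apply, mul_one]

variable [IsDomain R]

theorem mulLeftOp_injective {a : R} (ha : a ≠ 0) : Injective (mulLeftOp a) :=
  fun _ _ => mul_left_cancel₀ ha

theorem comap_mulLeftOp_span_mul {a : R} (ha : a ≠ 0) (g : R) :
    comap (mulLeftOp a) (Rᵐᵒᵖ ∙ a * g) = Rᵐᵒᵖ ∙ g := by
  rw [← map_mulLeftOp_span_singleton, comap_map_eq_of_injective (mulLeftOp_injective ha)]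

noncomputable def spanSingletonEquiv {c : R} (hc : c ≠ 0) : (Rᵐᵒᵖ ∙ c) ≃ₗ[Rᵐᵒᵖ] R :=
  ((LinearEquiv.ofInjective _ (mulLeftOp_injective hc)).trans
    (LinearEquiv.ofEq _ _ (range_mulLeftOp c))).symm

end RightIdeals

section TwoFir

variable (R : Type*) [Ring R]

/-- Cohn's characterization of 2-firs among domains. -/
def IsTwoFir : Prop :=
  ∀ a b : R, a ≠ 0 → b ≠ 0 → (Rᵐᵒᵖ ∙ a) ⊓ (Rᵐᵒᵖ ∙ b) ≠ ⊥ →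
    ∃ c : R, (Rᵐᵒᵖ ∙ a) ⊔ (Rᵐᵒᵖ ∙ b) = Rᵐᵒᵖ ∙ c

variable {R}

theorem inf_span_singleton_eq_sup_of_add_eq_one {a b p q : R} (h : a * p + b * q = 1) :
    (Rᵐᵒᵖ ∙ a) ⊓ (Rᵐᵒᵖ ∙ b) = (Rᵐᵒᵖ ∙ a * p * b) ⊔ (Rᵐᵒᵖ ∙ b * q * a) := by
  apply le_antisymm
  · rintro x ⟨hxa, hxb⟩
    obtain ⟨r, rfl⟩ := mem_span_singleton_iff_exists_mul.1 hxa
    obtain ⟨s, hs⟩ := mem_span_singleton_iff_exists_mul.1 hxb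
    have hx : a * r = a * p * b * s + b * q * a * r :=
      calc a * r = (a * p + b * q) * (a * r) := by rw [h, one_mul]
        _ = a * p * (b * s) + b * q * a * r := by rw [hs]; noncomm_ring
        _ = a * p * b * s + b * q * a * r := by noncomm_ring
    rw [hx]
    exact add_mem (mem_sup_left (mem_span_singleton_iff_exists_mul.2 ⟨s, rfl⟩))
      (mem_sup_right (mem_span_singleton_iff_exists_mul.2 ⟨r, rfl⟩))
  · have hap : a * p = 1 - b * q := eq_sub_of_add_eq h
    have hbq : b * q = 1 - a * p := eq_sub_of_add_eq' h
    refine sup_le ((span_singleton_le_iff_mem _ _).2 (mem_inf.2 ⟨?_, ?_⟩))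
      ((span_singleton_le_iff_mem _ _).2 (mem_inf.2 ⟨?_, ?_⟩)) <;>
      rw [mem_span_singleton_iff_exists_mul]
    · exact ⟨p * b, by noncomm_ring⟩
    · exact ⟨1 - q * b, by rw [hap]; noncomm_ring⟩
    · exact ⟨1 - p * a, by rw [hbq]; noncomm_ring⟩
    · exact ⟨q * a, by noncomm_ring⟩

variable [IsDomain R]

theorem IsTwoFir.sup_span_singleton_isPrincipal_of_mul_eq (hR : IsTwoFir R) {x y p q : R}
    (hxy : x * p = y * q) (hq : q ≠ 0) : ((Rᵐᵒᵖ ∙ x) ⊔ (Rᵐᵒᵖ ∙ y)).IsPrincipal := by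
  obtain rfl | hy := eq_or_ne y 0
  · rw [span_singleton_eq_bot.2 rfl, sup_bot_eq]
    exact ⟨⟨x, rfl⟩⟩
  obtain rfl | hx := eq_or_ne x 0
  · rw [span_singleton_eq_bot.2 rfl, bot_sup_eq]
    exact ⟨⟨y, rfl⟩⟩
  have hinf : y * q ∈ (Rᵐᵒᵖ ∙ x) ⊓ (Rᵐᵒᵖ ∙ y) :=
    ⟨mem_span_singleton_iff_exists_mul.2 ⟨p, hxy⟩, mem_span_singleton_iff_exists_mul.2 ⟨q, rfl⟩⟩
  obtain ⟨c, hc⟩ := hR x y hx hy ((Submodule.ne_bot_iff _).2 ⟨_, hinf, mul_ne_zero hy hq⟩)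
  exact ⟨⟨c, hc⟩⟩

theorem IsTwoFir.inf_span_singleton_isPrincipal_of_add_eq_one (hR : IsTwoFir R) {a b p q : R}
    (h : a * p + b * q = 1) : ((Rᵐᵒᵖ ∙ a) ⊓ (Rᵐᵒᵖ ∙ b)).IsPrincipal := by
  rw [inf_span_singleton_eq_sup_of_add_eq_one h]
  obtain rfl | hp := eq_or_ne p 0
  · rw [mul_zero, zero_mul, span_singleton_eq_bot.2 rfl, bot_sup_eq]
    exact ⟨⟨_, rfl⟩⟩
  have hap : a * p = 1 - b * q := eq_sub_of_add_eq h
  refine hR.sup_span_singleton_isPrincipal_of_mul_eq (p := q) ?_ hp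
  calc a * p * b * q = (a * p) * (b * q) := by noncomm_ring
    _ = b * q * (a * p) := by rw [hap]; noncomm_ring
    _ = b * q * a * p := by noncomm_ring

theorem IsTwoFir.inf_span_singleton_isPrincipal (hR : IsTwoFir R) (a b : R) :
    ((Rᵐᵒᵖ ∙ a) ⊓ (Rᵐᵒᵖ ∙ b)).IsPrincipal := by
  by_cases hinf : (Rᵐᵒᵖ ∙ a) ⊓ (Rᵐᵒᵖ ∙ b) = ⊥
  · rw [hinf]
    infer_instance
  have ha : a ≠ 0 := by rintro rfl; simp at hinf
  have hb : b ≠ 0 := by rintro rfl; simp at hinf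
  obtain ⟨c, hc⟩ := hR a b ha hb hinf
  obtain ⟨a₁, rfl⟩ :=
    mem_span_singleton_iff_exists_mul.1 (hc ▸ mem_sup_left (mem_span_singleton_self a))
  obtain ⟨b₁, rfl⟩ :=
    mem_span_singleton_iff_exists_mul.1 (hc ▸ mem_sup_right (mem_span_singleton_self b))
  obtain ⟨_, hx, _, hy, hxy⟩ := mem_sup.1 (hc ▸ mem_span_singleton_self c)
  obtain ⟨p, rfl⟩ := mem_span_singleton_iff_exists_mul.1 hx
  obtain ⟨q, rfl⟩ := mem_span_singleton_iff_exists_mul.1 hy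
  have hc0 : c ≠ 0 := left_ne_zero_of_mul ha
  have hpq : a₁ * p + b₁ * q = 1 :=
    mul_left_cancel₀ hc0 (by rw [mul_add, ← mul_assoc, ← mul_assoc, hxy, mul_one])
  rw [← map_mulLeftOp_span_singleton, ← map_mulLeftOp_span_singleton,
    ← map_inf _ (mulLeftOp_injective hc0)]
  exact (hR.inf_span_singleton_isPrincipal_of_add_eq_one hpq).map _

theorem IsTwoFir.comap_mulLeftOp_isPrincipal (hR : IsTwoFir R) (a b : R) :
    (comap (mulLeftOp a) (Rᵐᵒᵖ ∙ b)).IsPrincipal := by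
  obtain rfl | ha := eq_or_ne a 0
  · refine ⟨⟨1, ?_⟩⟩
    ext x
    simp [mem_span_singleton_iff_exists_mul]
  obtain ⟨⟨m, hm⟩⟩ := hR.inf_span_singleton_isPrincipal a b
  obtain ⟨g, rfl⟩ := mem_span_singleton_iff_exists_mul.1 (hm ▸ mem_span_singleton_self m).1
  have hmap :
      map (mulLeftOp a) (comap (mulLeftOp a) (Rᵐᵒᵖ ∙ b)) = map (mulLeftOp a) (Rᵐᵒᵖ ∙ g) := by
    rw [map_comap_eq, range_mulLeftOp, hm, map_mulLeftOp_span_singleton]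
  rw [map_injective_of_injective (mulLeftOp_injective ha) hmap]
  exact ⟨⟨g, rfl⟩⟩

end TwoFir

section Presentations

variable {R : Type*} [Ring R] {M : Type*} [AddCommGroup M] [Module Rᵐᵒᵖ M]

variable (R) in
def IsCyclicallyPresented (M : Type*) [AddCommGroup M] [Module Rᵐᵒᵖ M] : Prop :=
  ∃ a : R, Nonempty (M ≃ₗ[Rᵐᵒᵖ] R ⧸ Rᵐᵒᵖ ∙ a)

/-- `π`-exactness of `N`, in the paper's terminology. -/
def IsExactSubmodule (π : R →ₗ[Rᵐᵒᵖ] M) (N : Submodule Rᵐᵒᵖ M) : Prop :=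
  Nonempty (comap π N ≃ₗ[Rᵐᵒᵖ] R)

theorem isCyclicallyPresented_quotient {I : Submodule Rᵐᵒᵖ R} (hI : I.IsPrincipal) :
    IsCyclicallyPresented R (R ⧸ I) := by
  obtain ⟨⟨a, rfl⟩⟩ := hI
  exact ⟨a, ⟨LinearEquiv.refl _ _⟩⟩

noncomputable def mapSpanSingletonEquiv (π : R →ₗ[Rᵐᵒᵖ] M) (c : R) :
    map π (Rᵐᵒᵖ ∙ c) ≃ₗ[Rᵐᵒᵖ] R ⧸ comap (mulLeftOp c) (ker π) :=
  (((quotEquivOfEq _ _ (ker_comp _ _).symm).trans (π ∘ₗ mulLeftOp c).quotKerEquivRange).trans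
    (LinearEquiv.ofEq _ _ (by rw [range_comp, range_mulLeftOp]))).symm

theorem isCyclicallyPresented_map_span_singleton_of_isPrincipal {π : R →ₗ[Rᵐᵒᵖ] M} {c : R}
    (h : (comap (mulLeftOp c) (ker π)).IsPrincipal) :
    IsCyclicallyPresented R (map π (Rᵐᵒᵖ ∙ c)) := by
  obtain ⟨g, hg⟩ := isCyclicallyPresented_quotient h
  exact ⟨g, hg.map (mapSpanSingletonEquiv π c).trans⟩

theorem IsExactSubmodule.comap_isPrincipal {π : R →ₗ[Rᵐᵒᵖ] M} {N : Submodule Rᵐᵒᵖ M}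
    (h : IsExactSubmodule π N) : (comap π N).IsPrincipal :=
  isPrincipal_of_linearEquiv h.some

theorem isExactSubmodule_map_span_singleton [IsDomain R] {π : R →ₗ[Rᵐᵒᵖ] M} {c : R} (hc : c ≠ 0)
    (hker : ker π ≤ Rᵐᵒᵖ ∙ c) : IsExactSubmodule π (map π (Rᵐᵒᵖ ∙ c)) :=
  ⟨(LinearEquiv.ofEq _ _ (comap_map_eq_self hker)).trans (spanSingletonEquiv hc)⟩

theorem exists_ker_eq_comap_mulLeftOp (π : R →ₗ[Rᵐᵒᵖ] M) {I : Submodule Rᵐᵒᵖ R}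
    (e : M ≃ₗ[Rᵐᵒᵖ] R ⧸ I) : ∃ u, ker π = comap (mulLeftOp u) I := by
  obtain ⟨u, hu⟩ := I.mkQ_surjective (e (π 1))
  have hπ : e.toLinearMap ∘ₗ π = I.mkQ ∘ₗ mulLeftOp u := ext_ring_op (by simp [hu])
  exact ⟨u, by rw [← LinearEquiv.ker_comp e π, hπ, ker_comp, ker_mkQ]⟩

variable [IsDomain R]

theorem IsTwoFir.ker_isPrincipal (hR : IsTwoFir R) (π : R →ₗ[Rᵐᵒᵖ] M)
    (hM : IsCyclicallyPresented R M) : (ker π).IsPrincipal := by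
  obtain ⟨a, ⟨e⟩⟩ := hM
  obtain ⟨u, hu⟩ := exists_ker_eq_comap_mulLeftOp π e
  rw [hu]
  exact hR.comap_mulLeftOp_isPrincipal u a

theorem IsTwoFir.isCyclicallyPresented_map_span_singleton (hR : IsTwoFir R)
    {π : R →ₗ[Rᵐᵒᵖ] M} (hker : (ker π).IsPrincipal) (c : R) :
    IsCyclicallyPresented R (map π (Rᵐᵒᵖ ∙ c)) := by
  obtain ⟨⟨e, he⟩⟩ := hker
  apply isCyclicallyPresented_map_span_singleton_of_isPrincipal
  rw [he]
  exact hR.comap_mulLeftOp_isPrincipal c e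

theorem IsTwoFir.isCyclicallyPresented_sup (hR : IsTwoFir R) {π : R →ₗ[Rᵐᵒᵖ] M}
    (hπ : Surjective π) (hker : ker π ≠ ⊥) (hM : IsCyclicallyPresented R M)
    {N₁ N₂ : Submodule Rᵐᵒᵖ M} (h₁ : IsExactSubmodule π N₁) (h₂ : IsExactSubmodule π N₂) :
    IsCyclicallyPresented R ↥(N₁ ⊔ N₂) ∧ IsExactSubmodule π (N₁ ⊔ N₂) := by
  obtain ⟨⟨c₁, hc₁⟩⟩ := h₁.comap_isPrincipal
  obtain ⟨⟨c₂, hc₂⟩⟩ := h₂.comap_isPrincipal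
  have hle₁ : ker π ≤ Rᵐᵒᵖ ∙ c₁ := hc₁ ▸ ker_le_comap π
  have hle₂ : ker π ≤ Rᵐᵒᵖ ∙ c₂ := hc₂ ▸ ker_le_comap π
  have ne_zero_of_ker_le {x : R} (hle : ker π ≤ Rᵐᵒᵖ ∙ x) : x ≠ 0 := by
    rintro rfl
    exact hker (eq_bot_iff.2 (by simpa using hle))
  obtain ⟨c, hc⟩ :=
    hR c₁ c₂ (ne_zero_of_ker_le hle₁) (ne_zero_of_ker_le hle₂)
      (ne_bot_of_le_ne_bot hker (le_inf hle₁ hle₂))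
  have hle : ker π ≤ Rᵐᵒᵖ ∙ c := hc ▸ le_sup_of_le_left hle₁
  have hsup : N₁ ⊔ N₂ = map π (Rᵐᵒᵖ ∙ c) := by
    rw [← hc, Submodule.map_sup, ← hc₁, ← hc₂, map_comap_eq_of_surjective hπ,
      map_comap_eq_of_surjective hπ]
  rw [hsup]
  exact ⟨hR.isCyclicallyPresented_map_span_singleton (hR.ker_isPrincipal π hM) c,
    isExactSubmodule_map_span_singleton (ne_zero_of_ker_le hle) hle⟩

end Presentations

theorem isTwoFir_of_isExactSubmodule_sup {R : Type*} [Ring R] [IsDomain R]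
    (H : ∀ d : R, d ≠ 0 → ∀ N₁ N₂ : Submodule Rᵐᵒᵖ (R ⧸ Rᵐᵒᵖ ∙ d),
      IsCyclicallyPresented R N₁ → IsExactSubmodule (Rᵐᵒᵖ ∙ d).mkQ N₁ →
      IsCyclicallyPresented R N₂ → IsExactSubmodule (Rᵐᵒᵖ ∙ d).mkQ N₂ →
      IsExactSubmodule (Rᵐᵒᵖ ∙ d).mkQ (N₁ ⊔ N₂)) :
    IsTwoFir R := by
  intro a b ha hb hinf
  obtain ⟨d, ⟨hda, hdb⟩, hd⟩ := exists_mem_ne_zero_of_ne_bot hinf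
  have hker {x : R} (hdx : d ∈ Rᵐᵒᵖ ∙ x) : ker (Rᵐᵒᵖ ∙ d).mkQ ≤ Rᵐᵒᵖ ∙ x := by
    rwa [ker_mkQ, span_singleton_le_iff_mem]
  have hcyc {x : R} (hx : x ≠ 0) (hdx : d ∈ Rᵐᵒᵖ ∙ x) :
      IsCyclicallyPresented R (map (Rᵐᵒᵖ ∙ d).mkQ (Rᵐᵒᵖ ∙ x)) := by
    obtain ⟨y, rfl⟩ := mem_span_singleton_iff_exists_mul.1 hdx
    apply isCyclicallyPresented_map_span_singleton_of_isPrincipal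
    rw [ker_mkQ, comap_mulLeftOp_span_mul hx]
    exact ⟨⟨y, rfl⟩⟩
  have hsup := H d hd _ _ (hcyc ha hda) (isExactSubmodule_map_span_singleton ha (hker hda))
    (hcyc hb hdb) (isExactSubmodule_map_span_singleton hb (hker hdb))
  obtain ⟨⟨c, hc⟩⟩ := hsup.comap_isPrincipal
  rw [← Submodule.map_sup, comap_map_eq_self (le_sup_of_le_left (hker hda))] at hc
  exact ⟨c, hc⟩

theorem stmt_12 {R : Type u} [Ring R] [IsDomain R] :
    (∀ (M : Type u) [AddCommGroup M] [Module Rᵐᵒᵖ M]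
      (πM : R →ₗ[Rᵐᵒᵖ] M), Surjective πM → LinearMap.ker πM ≠ ⊥ →
      (∃ a : R, Nonempty (M ≃ₗ[Rᵐᵒᵖ] (R ⧸ Submodule.span Rᵐᵒᵖ {a}))) →
      ∀ N₁ N₂ : Submodule Rᵐᵒᵖ M,
        (∃ b : R, Nonempty (↥N₁ ≃ₗ[Rᵐᵒᵖ] (R ⧸ Submodule.span Rᵐᵒᵖ {b}))) →
        Nonempty (↥(Submodule.comap πM N₁) ≃ₗ[Rᵐᵒᵖ] R) →
        (∃ b : R, Nonempty (↥N₂ ≃ₗ[Rᵐᵒᵖ] (R ⧸ Submodule.span Rᵐᵒᵖ {b}))) →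
        Nonempty (↥(Submodule.comap πM N₂) ≃ₗ[Rᵐᵒᵖ] R) →
        ((∃ b : R, Nonempty (↥(N₁ ⊔ N₂) ≃ₗ[Rᵐᵒᵖ] (R ⧸ Submodule.span Rᵐᵒᵖ {b}))) ∧
          Nonempty (↥(Submodule.comap πM (N₁ ⊔ N₂)) ≃ₗ[Rᵐᵒᵖ] R))) ↔
    (∀ a b : R, a ≠ 0 → b ≠ 0 →
      Submodule.span Rᵐᵒᵖ {a} ⊓ Submodule.span Rᵐᵒᵖ {b} ≠ ⊥ →
      ∃ c : R, Submodule.span Rᵐᵒᵖ {a} ⊔ Submodule.span Rᵐᵒᵖ {b} =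
        Submodule.span Rᵐᵒᵖ {c}) := by
  constructor
  · intro H
    refine isTwoFir_of_isExactSubmodule_sup fun d hd N₁ N₂ hN₁ h₁ hN₂ h₂ => ?_
    have hker : ker (Rᵐᵒᵖ ∙ d).mkQ ≠ ⊥ := by rwa [ker_mkQ, ne_eq, span_singleton_eq_bot]
    exact (H _ _ (mkQ_surjective _) hker ⟨d, ⟨LinearEquiv.refl _ _⟩⟩ N₁ N₂ hN₁ h₁ hN₂ h₂).2
  · intro (hR : IsTwoFir R) M _ _ π hπ hker hM N₁ N₂ _ h₁ _ h₂
    exact hR.isCyclicallyPresented_sup hπ hker hM h₁ h₂
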